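/- Let G be a finite graph, k ∈ ℕ, and let X be a k-block of G. If X occurs as a part of some tree-decomposition of G of adhesion < k (i.e., X = V_t for some node t), then every separation in S(X) has order < k. -/

import Mathlib

open SimpleGraph Set

namespace CanonicalTD

variable {V : Type*} {ι : Type*}

/-- `p = (A,B)` is a separation of `G`: `A ∪ B = V` and no edge between `A∖B` and `B∖A`. -/
def IsSep (G : SimpleGraph V) (p : Set V × Set V) : Prop :=
  p.1 ∪ p.2 = univ ∧ ∀ a ∈ p.1 \ p.2, ∀ b ∈ p.2 \ p.1, ¬G.Adj a b

/-- The order `|A ∩ B|` of a separation `(A,B)`. -/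
noncomputable def sepOrder (p : Set V × Set V) : ℕ := (p.1 ∩ p.2).ncard

/-- A separation is proper if both `A∖B` and `B∖A` are nonempty. -/
def ProperSep (p : Set V × Set V) : Prop := (p.1 \ p.2).Nonempty ∧ (p.2 \ p.1).Nonempty

/-- The partial order on separations: `(A,B) ≤ (C,D)` iff `A ⊆ C` and `D ⊆ B`. -/
def SepLE (p q : Set V × Set V) : Prop := p.1 ⊆ q.1 ∧ q.2 ⊆ p.2

/-- Two separations are nested if they become comparable after possibly inverting. -/
def Nested (p q : Set V × Set V) : Prop :=
  SepLE p q ∨ SepLE q p ∨ SepLE p q.swap ∨ SepLE q.swap p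

/-- A separation `(A,B)` is tight if every vertex of `A ∩ B` has a neighbour in `A∖B`
and a neighbour in `B∖A`. -/
def TightSep (G : SimpleGraph V) (p : Set V × Set V) : Prop :=
  ∀ v ∈ p.1 ∩ p.2, (∃ a ∈ p.1 \ p.2, G.Adj v a) ∧ ∃ b ∈ p.2 \ p.1, G.Adj v b

/-- `S_k`: the set of all proper separations of `G` of order `< k`. -/
def Sk (G : SimpleGraph V) (k : ℕ) : Set (Set V × Set V) :=
  {p | IsSep G p ∧ ProperSep p ∧ sepOrder p < k}

/-- A separation system of `G`: a set of separations closed under inverses. -/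
def IsSepSystem (G : SimpleGraph V) (N : Set (Set V × Set V)) : Prop :=
  (∀ p ∈ N, IsSep G p) ∧ ∀ p ∈ N, p.swap ∈ N

def NestedSystem (N : Set (Set V × Set V)) : Prop :=
  ∀ p ∈ N, ∀ q ∈ N, Nested p q

def ProperSystem (N : Set (Set V × Set V)) : Prop := ∀ p ∈ N, ProperSep p

/-- An orientation of `N`: contains exactly one of `(A,B)`, `(B,A)` for each `(A,B) ∈ N`. -/
def IsOrientation (N O : Set (Set V × Set V)) : Prop :=
  O ⊆ N ∧ ∀ p ∈ N, (p ∈ O ↔ p.swap ∉ O)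

/-- Consistency: no distinct `(A,B),(C,D) ∈ O` with `(D,C) ≤ (A,B)`. -/
def Consistent (O : Set (Set V × Set V)) : Prop :=
  ∀ p ∈ O, ∀ q ∈ O, p ≠ q → ¬SepLE q.swap p

/-- A `k`-profile of `G`. -/
def IsProfile (G : SimpleGraph V) (k : ℕ) (P : Set (Set V × Set V)) : Prop :=
  IsOrientation (Sk G k) P ∧ Consistent P ∧
    ∀ p ∈ P, ∀ q ∈ P, (p.2 ∩ q.2, p.1 ∪ q.1) ∉ P

/-- `(T, Vt)` is a tree-decomposition of `G`. -/
def IsTreeDecomp (G : SimpleGraph V) (T : SimpleGraph ι) (Vt : ι → Set V) : Prop :=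
  T.IsTree ∧ (⋃ t, Vt t) = univ ∧
  (∀ u v, G.Adj u v → ∃ t, u ∈ Vt t ∧ v ∈ Vt t) ∧
  ∀ (t1 t3 : ι) (w : T.Walk t1 t3), w.IsPath →
    ∀ t2 ∈ w.support, Vt t1 ∩ Vt t3 ⊆ Vt t2

/-- The vertex set of the component of `T - t1t2` containing `t1`. -/
def side (T : SimpleGraph ι) (t1 t2 : ι) : Set ι :=
  {s | (T.deleteEdges {s(t1, t2)}).Reachable t1 s}

/-- The separation induced by the oriented edge `(t1, t2)` of `T`. -/
def inducedSep (T : SimpleGraph ι) (Vt : ι → Set V) (t1 t2 : ι) : Set V × Set V :=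
  (⋃ s ∈ side T t1 t2, Vt s, ⋃ s ∈ side T t2 t1, Vt s)

/-- The set of separations induced by oriented edges of `T`. -/
def inducedSeps (T : SimpleGraph ι) (Vt : ι → Set V) : Set (Set V × Set V) :=
  {p | ∃ t1 t2, T.Adj t1 t2 ∧ p = inducedSep T Vt t1 t2}

/-- `O(t)`: separations induced by oriented edges `(t1,t2)` with `t` in the component of `t2`. -/
def Otow (T : SimpleGraph ι) (Vt : ι → Set V) (t : ι) : Set (Set V × Set V) :=
  {p | ∃ t1 t2, T.Adj t1 t2 ∧ t ∈ side T t2 t1 ∧ p = inducedSep T Vt t1 t2}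

/-- The map assigning to each oriented edge of `T` its induced separation is a bijection
onto `N`. -/
def EdgeSepBij (T : SimpleGraph ι) (Vt : ι → Set V) (N : Set (Set V × Set V)) : Prop :=
  (∀ t1 t2, T.Adj t1 t2 → inducedSep T Vt t1 t2 ∈ N) ∧
  ∀ p ∈ N, ∃! e : ι × ι, T.Adj e.1 e.2 ∧ inducedSep T Vt e.1 e.2 = p

/-- The tree-decomposition has adhesion `< k`. -/
def AdhesionLt (T : SimpleGraph ι) (Vt : ι → Set V) (k : ℕ) : Prop :=
  ∀ t1 t2, T.Adj t1 t2 → (Vt t1 ∩ Vt t2).ncard < k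

/-- The tree-decomposition is canonical: the automorphism group of `G` acts on `T`
compatibly with the parts. -/
def Canonical (G : SimpleGraph V) (T : SimpleGraph ι) (Vt : ι → Set V) : Prop :=
  ∃ ρ : (G ≃g G) → (T ≃g T),
    (∀ φ ψ : G ≃g G, ρ (φ.trans ψ) = (ρ φ).trans (ρ ψ)) ∧
    ∀ (φ : G ≃g G) (t : ι), (⇑φ) '' Vt t = Vt (ρ φ t)

/-- `X` is `(<k)`-inseparable in `G`. -/
def Inseparable' (G : SimpleGraph V) (k : ℕ) (X : Set V) : Prop :=
  ∀ p : Set V × Set V, IsSep G p → sepOrder p < k → X ⊆ p.1 ∨ X ⊆ p.2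

/-- `X` is a `k`-block of `G`: a maximal `(<k)`-inseparable set of at least `k` vertices. -/
def IsBlock (G : SimpleGraph V) (k : ℕ) (X : Set V) : Prop :=
  k ≤ X.ncard ∧ Inseparable' G k X ∧
    ∀ Y, Inseparable' G k Y → X ⊆ Y → Y = X

/-- The `k`-profile `P_k(X)` induced by a `k`-block `X`. -/
def blockProfile (G : SimpleGraph V) (k : ℕ) (X : Set V) : Set (Set V × Set V) :=
  {p | p ∈ Sk G k ∧ X ⊆ p.2 ∧ ¬X ⊆ p.1}

/-- `p` is a `≤`-maximal element of `M`. -/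
def MaxIn (M : Set (Set V × Set V)) (p : Set V × Set V) : Prop :=
  p ∈ M ∧ ∀ q ∈ M, SepLE p q → q = p

/-- The `k`-block `X` is well separated in `S`: the maximal elements of `P_k(X) ∩ S`
are pairwise nested. -/
def WellSepIn (G : SimpleGraph V) (k : ℕ) (X : Set V) (S : Set (Set V × Set V)) : Prop :=
  ∀ p q, MaxIn (blockProfile G k X ∩ S) p → MaxIn (blockProfile G k X ∩ S) q → Nested p q

/-- `D` is the vertex set of a component of `G - X`. -/
def IsCompOf (G : SimpleGraph V) (X D : Set V) : Prop :=
  D ⊆ Xᶜ ∧ (G.induce D).Connected ∧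
    ∀ D', D ⊆ D' → D' ⊆ Xᶜ → (G.induce D').Connected → D' = D

/-- `S(X)`: the set of tight separations `(A,B)` with `X ⊆ B` and `A∖B` the vertex set of
a component of `G - X`. -/
def SX (G : SimpleGraph V) (X : Set V) : Set (Set V × Set V) :=
  {p | IsSep G p ∧ TightSep G p ∧ X ⊆ p.2 ∧ IsCompOf G X (p.1 \ p.2)}

/-- `G` is `m`-connected. -/
def IsKConnected (G : SimpleGraph V) [Fintype V] (m : ℕ) : Prop :=
  m < Fintype.card V ∧ ∀ U : Set V, U.ncard < m → (G.induce Uᶜ).Connected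

/-- The tree-decomposition distinguishes the set `Profs` of profiles. -/
def DistinguishesProfiles (T : SimpleGraph ι) (Vt : ι → Set V)
    (Profs : Set (Set (Set V × Set V))) : Prop :=
  ∀ P ∈ Profs, ∀ P' ∈ Profs, P ≠ P' → ∃ p ∈ inducedSeps T Vt, p ∈ P ∧ p.swap ∈ P'

/-- The tree-decomposition distinguishes every two distinct `k`-blocks efficiently. -/
def DistinguishesBlocksEff (G : SimpleGraph V) (k : ℕ) (T : SimpleGraph ι)
    (Vt : ι → Set V) : Prop :=
  ∀ X X', IsBlock G k X → IsBlock G k X' → X ≠ X' →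
    ∃ p ∈ inducedSeps T Vt, X ⊆ p.1 ∧ X' ⊆ p.2 ∧
      ∀ q : Set V × Set V, IsSep G q → X ⊆ q.1 → X' ⊆ q.2 → sepOrder p ≤ sepOrder q

/-!
The separator `A ∩ B` of `(A, B) ∈ S(X)` lies in `X`: a separator vertex outside `X` could be
added to the component `D = A ∖ B` of `G - X`, against its maximality. Let `X = V_t` and pick
a part `V_s` meeting `D`; then `s ≠ t`, and the first edge `bt` of the `t`–`s` path in `T`
induces a separation `(A', B')` with `A' ∩ B' ⊆ V_b ∩ V_t ⊆ X`. Being connected and disjoint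
from `X`, the component `D` lies in `A' ∖ B'`, so every separator vertex of `(A, B)`, which lies
in `X ⊆ B'` and has a neighbour in `D`, lies in `A' ∩ B'`. Hence `|A ∩ B| ≤ |V_b ∩ V_t| < k`.
-/

lemma _root_.SimpleGraph.Walk.reachable_deleteEdges_or {G : SimpleGraph V} {x w : V}
    (p : G.Walk x w) (u v : V)
    (hx : (G.deleteEdges {s(u, v)}).Reachable u x ∨ (G.deleteEdges {s(u, v)}).Reachable v x) :
    (G.deleteEdges {s(u, v)}).Reachable u w ∨ (G.deleteEdges {s(u, v)}).Reachable v w := by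
  induction p with
  | nil => exact hx
  | @cons x y w hxy p ih =>
    apply ih
    by_cases he : s(x, y) = s(u, v)
    · rcases Sym2.eq_iff.mp he with ⟨rfl, rfl⟩ | ⟨rfl, rfl⟩
      · exact Or.inr .rfl
      · exact Or.inl .rfl
    · have hxy' : (G.deleteEdges {s(u, v)}).Adj x y := by
        simpa only [deleteEdges_adj, mem_singleton_iff] using And.intro hxy he
      exact hx.imp (·.trans hxy'.reachable) (·.trans hxy'.reachable)

section Separations

variable {G : SimpleGraph V} {p : Set V × Set V}

lemma IsSep.mem_fst_of_adj (hp : IsSep G p) {a v : V} (ha : a ∈ p.1 \ p.2) (hav : G.Adj a v) :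
    v ∈ p.1 := by
  by_contra hv
  have hv2 : v ∈ p.2 := (hp.1.symm ▸ mem_univ v : v ∈ p.1 ∪ p.2).resolve_left hv
  exact hp.2 a ha v ⟨hv2, hv⟩ hav

lemma IsSep.subset_diff_of_connected (hp : IsSep G p) {D : Set V}
    (hD : (G.induce D).Connected) (hdisj : Disjoint D (p.1 ∩ p.2))
    {d : V} (hdD : d ∈ D) (hd : d ∈ p.1 \ p.2) : D ⊆ p.1 \ p.2 := by
  have hclosed : ∀ x y : D, (G.induce D).Adj x y → (x : V) ∈ p.1 \ p.2 → (y : V) ∈ p.1 \ p.2 :=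
    fun x y hxy hx ↦ ⟨hp.mem_fst_of_adj hx hxy,
      fun hy ↦ hdisj.notMem_of_mem_left y.2 ⟨hp.mem_fst_of_adj hx hxy, hy⟩⟩
  suffices ∀ {x y : D}, (G.induce D).Walk x y → (x : V) ∈ p.1 \ p.2 → (y : V) ∈ p.1 \ p.2 from
    fun e he ↦ this (hD.preconnected ⟨d, hdD⟩ ⟨e, he⟩).some hd
  intro x y w
  induction w with
  | nil => exact id
  | cons hxy _ ih => exact fun hx ↦ ih (hclosed _ _ hxy hx)

lemma inter_subset_of_mem_SX {X : Set V} (hp : p ∈ SX G X) : p.1 ∩ p.2 ⊆ X := by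
  obtain ⟨-, htight, -, hDX, hDconn, hDmax⟩ := hp
  intro v hv
  by_contra hvX
  obtain ⟨⟨a, ha, hva⟩, -⟩ := htight v hv
  have hconn : (G.induce ({v} ∪ (p.1 \ p.2))).Connected :=
    SimpleGraph.connected_induce_union SimpleGraph.Preconnected.of_subsingleton
      hDconn.preconnected rfl ha hva
  have hins := hDmax _ subset_union_right
    (union_subset (singleton_subset_iff.mpr hvX) hDX) hconn
  have hvD : v ∈ p.1 \ p.2 := hins ▸ Or.inl rfl
  exact hvD.2 hv.2

end Separations

section TreeDecompositions

variable {G : SimpleGraph V} {T : SimpleGraph ι} {Vt : ι → Set V}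

lemma mem_side_self (T : SimpleGraph ι) (t1 t2 : ι) : t1 ∈ side T t1 t2 :=
  .rfl

lemma mem_side_swap_iff {t1 t2 s : ι} :
    s ∈ side T t2 t1 ↔ (T.deleteEdges {s(t1, t2)}).Reachable t2 s := by
  change (T.deleteEdges {s(t2, t1)}).Reachable t2 s ↔ _
  rw [Sym2.eq_swap]

lemma mem_side_or_mem_side (hT : T.Connected) (t1 t2 t : ι) :
    t ∈ side T t1 t2 ∨ t ∈ side T t2 t1 :=
  ((hT t1 t).some.reachable_deleteEdges_or t1 t2 (Or.inl .rfl)).imp id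
    mem_side_swap_iff.mpr

lemma exists_adj_mem_side (hT : T.Connected) {t s : ι} (hts : t ≠ s) :
    ∃ b, T.Adj b t ∧ s ∈ side T b t := by
  classical
  obtain ⟨w, hw⟩ := (hT t s).some.toPath
  cases w with
  | nil => exact absurd rfl hts
  | @cons _ b _ htb w =>
    rw [SimpleGraph.Walk.cons_isPath_iff] at hw
    refine ⟨b, htb.symm, ⟨w.toDeleteEdges {s(b, t)} ?_⟩⟩
    rintro e he rfl
    exact hw.2 (w.snd_mem_support_of_mem_edges he)

lemma inducedSep_isSep (hTD : IsTreeDecomp G T Vt) (t1 t2 : ι) :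
    IsSep G (inducedSep T Vt t1 t2) := by
  obtain ⟨hT, hcover, hedge, -⟩ := hTD
  constructor
  · refine eq_univ_of_forall fun v ↦ ?_
    obtain ⟨t, ht⟩ := mem_iUnion.mp (hcover.symm ▸ mem_univ v : v ∈ ⋃ t, Vt t)
    exact (mem_side_or_mem_side hT.connected t1 t2 t).imp
      (mem_biUnion · ht) (mem_biUnion · ht)
  · rintro a ⟨-, ha⟩ b ⟨-, hb⟩ hab
    obtain ⟨t, hat, hbt⟩ := hedge a b hab
    rcases mem_side_or_mem_side hT.connected t1 t2 t with h | h
    · exact hb (mem_biUnion h hbt)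
    · exact ha (mem_biUnion h hat)

lemma inter_inducedSep_subset (hTD : IsTreeDecomp G T Vt) {t1 t2 : ι} (h12 : T.Adj t1 t2) :
    (inducedSep T Vt t1 t2).1 ∩ (inducedSep T Vt t1 t2).2 ⊆ Vt t1 ∩ Vt t2 := by
  classical
  rintro v ⟨hv1, hv2⟩
  obtain ⟨s, hs, hvs⟩ := mem_iUnion₂.mp hv1
  obtain ⟨s', hs', hvs'⟩ := mem_iUnion₂.mp hv2
  obtain ⟨w, hw⟩ := (hTD.1.connected s s').some.toPath
  have hbridge : ¬(T.deleteEdges {s(t1, t2)}).Reachable s s' := fun h ↦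
    SimpleGraph.isBridge_iff.mp (SimpleGraph.isAcyclic_iff_forall_adj_isBridge.mp
      hTD.1.isAcyclic h12) (hs.trans (h.trans (mem_side_swap_iff.mp hs').symm))
  have he := w.mem_edges_of_not_reachable_deleteEdges hbridge
  exact ⟨hTD.2.2.2 s s' w hw t1 (w.fst_mem_support_of_mem_edges he) ⟨hvs, hvs'⟩,
    hTD.2.2.2 s s' w hw t2 (w.snd_mem_support_of_mem_edges he) ⟨hvs, hvs'⟩⟩

lemma exists_adj_inter_subset_of_mem_SX (hTD : IsTreeDecomp G T Vt) {t : ι}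
    {p : Set V × Set V} (hp : p ∈ SX G (Vt t)) :
    ∃ b, T.Adj b t ∧ p.1 ∩ p.2 ⊆ Vt b ∩ Vt t := by
  have hpX := inter_subset_of_mem_SX hp
  obtain ⟨-, htight, -, hDX, hDconn, -⟩ := hp
  obtain ⟨⟨d, hdD⟩⟩ := hDconn.nonempty
  obtain ⟨s, hds⟩ := mem_iUnion.mp (hTD.2.1.symm ▸ mem_univ d : d ∈ ⋃ s, Vt s)
  have hts : t ≠ s := by rintro rfl; exact hDX hdD hds
  obtain ⟨b, hbt, hs⟩ := exists_adj_mem_side hTD.1.connected hts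
  set q := inducedSep T Vt b t
  have hq : IsSep G q := inducedSep_isSep hTD b t
  have hqX : q.1 ∩ q.2 ⊆ Vt t := fun v hv ↦ (inter_inducedSep_subset hTD hbt hv).2
  have hdisj : Disjoint (p.1 \ p.2) (q.1 ∩ q.2) :=
    disjoint_left.mpr fun v hvD hvq ↦ hDX hvD (hqX hvq)
  have hdq : d ∈ q.1 \ q.2 :=
    ⟨mem_biUnion hs hds, fun h ↦ disjoint_left.mp hdisj hdD ⟨mem_biUnion hs hds, h⟩⟩
  have hDq : p.1 \ p.2 ⊆ q.1 \ q.2 := hq.subset_diff_of_connected hDconn hdisj hdD hdq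
  refine ⟨b, hbt, fun v hv ↦ inter_inducedSep_subset hTD hbt ⟨?_, ?_⟩⟩
  · obtain ⟨⟨a, ha, hva⟩, -⟩ := htight v hv
    exact hq.mem_fst_of_adj (hDq ha) hva.symm
  · exact mem_biUnion (mem_side_self T t b) (hpX hv)

end TreeDecompositions

theorem stmt_14_general {V : Type*} [Fintype V] (G : SimpleGraph V) (k : ℕ)
    (X : Set V)
    (hpart : ∃ (ι : Type) (_ : Fintype ι) (T : SimpleGraph ι) (Vt : ι → Set V),
      IsTreeDecomp G T Vt ∧ AdhesionLt T Vt k ∧ ∃ t : ι, Vt t = X) :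
    ∀ p ∈ SX G X, sepOrder p < k := by
  intro p hp
  obtain ⟨ι, _, T, Vt, hTD, hadh, t, rfl⟩ := hpart
  obtain ⟨b, hbt, hsub⟩ := exists_adj_inter_subset_of_mem_SX hTD hp
  exact (ncard_le_ncard hsub (toFinite _)).trans_lt (hadh b t hbt)

/-- If a `k`-block `X` occurs as a part of some tree-decomposition of adhesion `< k`, then
every separation in `S(X)` has order `< k`. -/
theorem stmt_14 {V : Type*} [Fintype V] (G : SimpleGraph V) (k : ℕ)
    (X : Set V) (hX : IsBlock G k X)
    (hpart : ∃ (ι : Type) (_ : Fintype ι) (T : SimpleGraph ι) (Vt : ι → Set V),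
      IsTreeDecomp G T Vt ∧ AdhesionLt T Vt k ∧ ∃ t : ι, Vt t = X) :
    ∀ p ∈ SX G X, sepOrder p < k :=
  stmt_14_general G k X hpart

end CanonicalTD
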